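/- arXiv:1511.02574 — 2 statements merged into one kernel-verified Lean document; each statement's English description precedes it below -/
import Mathlib

section
/- Let $X \sim B(n,p)$ be a binomial random variable and let $k$ be an integer with $np < k < n$. Then $\mathbb{P}(X \ge k) \le \exp\left(-n\, D\left(\tfrac{k}{n} \,\Big\|\, p\right)\right)$, where $D(a\|b) = a \ln\frac{a}{b} + (1-a)\ln\frac{1-a}{1-b}$ is the binary relative entropy (natural log). -/
/-!
Chernoff's exponential-moment argument: for `r ≥ 1`, weighting the tail terms `i ≥ k` by
`r ^ i ≥ r ^ k` and adding the terms `i < k` gives `P(X ≥ k) r ^ k ≤ (p r + 1 - p) ^ n`.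
At the optimal `r` the right side divided by `r ^ k` is
`(p / a) ^ k ((1 - p) / (1 - a)) ^ (n - k) = exp (-n D(a ‖ p))`, where `a = k / n`.
-/

open Finset

/-- Binary relative entropy (with natural logarithm). -/
noncomputable def relEntropy (a b : ℝ) : ℝ :=
  a * Real.log (a / b) + (1 - a) * Real.log ((1 - a) / (1 - b))

theorem binomial_tail_mul_pow_le_add_pow (n k : ℕ) {p r : ℝ} (hp₀ : 0 ≤ p) (hp₁ : p ≤ 1)
    (hr : 1 ≤ r) :
    (∑ i ∈ Icc k n, (n.choose i : ℝ) * p ^ i * (1 - p) ^ (n - i)) * r ^ k ≤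
      (p * r + (1 - p)) ^ n := by
  rw [add_pow, sum_mul]
  calc ∑ i ∈ Icc k n, (n.choose i : ℝ) * p ^ i * (1 - p) ^ (n - i) * r ^ k
      ≤ ∑ i ∈ Icc k n, (p * r) ^ i * (1 - p) ^ (n - i) * (n.choose i : ℝ) := by
        refine sum_le_sum fun i hi => ?_
        calc (n.choose i : ℝ) * p ^ i * (1 - p) ^ (n - i) * r ^ k
            ≤ (n.choose i : ℝ) * p ^ i * (1 - p) ^ (n - i) * r ^ i := by
              gcongr
              exact (mem_Icc.mp hi).1
          _ = (p * r) ^ i * (1 - p) ^ (n - i) * (n.choose i : ℝ) := by ring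
    _ ≤ ∑ i ∈ range (n + 1), (p * r) ^ i * (1 - p) ^ (n - i) * (n.choose i : ℝ) := by
        refine sum_le_sum_of_subset_of_nonneg (fun i hi => ?_) (fun i _ _ => by positivity)
        exact mem_range.mpr (Nat.lt_succ_of_le (mem_Icc.mp hi).2)

theorem exp_neg_mul_relEntropy {a b : ℝ} (ha₀ : 0 < a) (ha₁ : a < 1) (hb₀ : 0 < b)
    (hb₁ : b < 1) (x : ℝ) :
    Real.exp (-x * relEntropy a b) =
      (b / a) ^ (x * a) * ((1 - b) / (1 - a)) ^ (x * (1 - a)) := by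
  have hb' : 0 < 1 - b := sub_pos.mpr hb₁
  have ha' : 0 < 1 - a := sub_pos.mpr ha₁
  rw [Real.rpow_def_of_pos (by positivity), Real.rpow_def_of_pos (by positivity), ← Real.exp_add,
    relEntropy, ← inv_div a b, ← inv_div (1 - a) (1 - b), Real.log_inv, Real.log_inv]
  ring_nf

theorem exp_neg_mul_relEntropy_div {n k : ℕ} {b : ℝ} (hk₀ : 0 < k) (hk : k < n) (hb₀ : 0 < b)
    (hb₁ : b < 1) :
    Real.exp (-(n : ℝ) * relEntropy ((k : ℝ) / n) b) =
      (b / (k / n)) ^ k * ((1 - b) / (1 - k / n)) ^ (n - k) := by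
  have hn : (0 : ℝ) < n := by exact_mod_cast hk₀.trans hk
  rw [exp_neg_mul_relEntropy (by positivity) ((div_lt_one hn).mpr (by exact_mod_cast hk)) hb₀ hb₁,
    mul_div_cancel₀ _ hn.ne', mul_one_sub, mul_div_cancel₀ _ hn.ne', ← Nat.cast_sub hk.le,
    Real.rpow_natCast, Real.rpow_natCast]

/-- The minimiser over `r` of `(p r + 1 - p) ^ n / r ^ k`, for `a = k / n`. -/
noncomputable def chernoffTilt (a p : ℝ) : ℝ :=
  a * (1 - p) / ((1 - a) * p)

theorem one_le_chernoffTilt {a p : ℝ} (hp₀ : 0 < p) (hpa : p ≤ a) (ha₁ : a < 1) :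
    1 ≤ chernoffTilt a p :=
  (one_le_div (mul_pos (sub_pos.mpr ha₁) hp₀)).mpr (by nlinarith)

theorem add_pow_chernoffTilt {a p : ℝ} (hp₀ : p ≠ 0) (ha₀ : a ≠ 0) (ha₁ : a ≠ 1) {n k : ℕ}
    (hk : k ≤ n) :
    (p * chernoffTilt a p + (1 - p)) ^ n =
      (p / a) ^ k * ((1 - p) / (1 - a)) ^ (n - k) * chernoffTilt a p ^ k := by
  have ha₁' : 1 - a ≠ 0 := sub_ne_zero.mpr ha₁.symm
  have hmgf : p * chernoffTilt a p + (1 - p) = (1 - p) / (1 - a) := by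
    rw [chernoffTilt]; field_simp; ring
  have hratio : chernoffTilt a p * (p / a) = (1 - p) / (1 - a) := by
    rw [chernoffTilt]; field_simp
  rw [hmgf, mul_right_comm, ← mul_pow, mul_comm (p / a), hratio, pow_mul_pow_sub _ hk]

/-- Chernoff–Hoeffding upper-tail bound for the binomial distribution `B(n,p)`:
`P(X ≥ k) ≤ exp(-n D(k/n ‖ p))` whenever `np < k < n`. -/
theorem binomial_upper_tail_chernoff (n k : ℕ) (p : ℝ) (hp₀ : 0 < p) (hp₁ : p < 1)
    (hk₁ : (n : ℝ) * p < k) (hk₂ : k < n) :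
    ∑ i ∈ Finset.Icc k n, (n.choose i : ℝ) * p ^ i * (1 - p) ^ (n - i) ≤
      Real.exp (-(n : ℝ) * relEntropy ((k : ℝ) / n) p) := by
  have hn : (0 : ℝ) < n := by exact_mod_cast (Nat.zero_le k).trans_lt hk₂
  have hk₀ : 0 < k := by exact_mod_cast (show (0 : ℝ) < k by nlinarith)
  set a : ℝ := k / n
  have hpa : p < a := (lt_div_iff₀ hn).mpr (by linarith)
  have ha₁ : a < 1 := (div_lt_one hn).mpr (by exact_mod_cast hk₂)
  have hr₁ := one_le_chernoffTilt hp₀ hpa.le ha₁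
  have htail := binomial_tail_mul_pow_le_add_pow n k hp₀.le hp₁.le hr₁
  rw [add_pow_chernoffTilt hp₀.ne' (hp₀.trans hpa).ne' ha₁.ne hk₂.le] at htail
  rw [exp_neg_mul_relEntropy_div hk₀ hk₂ hp₀ hp₁]
  exact le_of_mul_le_mul_right htail (pow_pos (zero_lt_one.trans_le hr₁) k)
end

section
/- Suppose in a unit-area network each of at least $c n$ source–destination pairs ($c > 0$ constant) requires multihop transmission over distance at least $d_n = n^{-(1-(\alpha-\beta))/2 - \epsilon'}$, each active hop with transmission radius $r$ exclusively occupies area at least $\pi r d_n$ per pair, and simultaneously active pairs have disjoint exclusive areas within the unit square. If additionally $r \ge c_7 \sqrt{\log n / n}$, then the symmetric per-node throughput satisfies $T_n \le \frac{W}{\pi c_7} n^{-(\alpha-\beta)/2} \cdot n^{\epsilon'} (\log n)^{-1/2}$, where $W$ is the per-link rate. -/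
open Real

/-!
At most `1 / (π r d_n)` pairs can be active at once, each carrying rate at most `W`, so
`T_n ≤ W / (π n r d_n)`. Inserting `r ≥ c₇ √(log n / n)` turns the denominator `n r d_n` into
`c₇ √(log n) n^((α-β)/2 - ε')`.
-/

theorem le_div_mul_of_mul_le_one {W N S T x A : ℝ} (hW : 0 ≤ W) (hx : 0 < x) (hA : 0 < A)
    (hN : N * A ≤ 1) (hS : S ≤ W * N) (hT : T ≤ S / x) : T ≤ W / (x * A) := by
  have hN' : N ≤ 1 / A := (le_div_iff₀ hA).2 hN
  calc T ≤ S / x := hT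
    _ ≤ W * N / x := by gcongr
    _ ≤ W * (1 / A) / x := by gcongr
    _ = W / (x * A) := by field_simp

theorem mul_sqrt_div_mul_rpow {x : ℝ} (L γ ε : ℝ) (hx : 0 < x) :
    x * √(L / x) * x ^ (-(1 - γ) / 2 - ε) = √L * x ^ (γ / 2 - ε) := by
  have hsqrt : x * √(L / x) = √L * x ^ (1 / 2 : ℝ) := by
    rw [sqrt_div' L hx.le, ← sqrt_eq_rpow]
    field_simp
    rw [sq_sqrt hx.le, mul_comm]
  rw [hsqrt, mul_assoc, ← rpow_add hx]
  ring_nf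

theorem inv_sqrt_mul_rpow {x L : ℝ} (γ ε : ℝ) (hx : 0 < x) (hL : 0 ≤ L) :
    (√L * x ^ (γ / 2 - ε))⁻¹ = x ^ (-γ / 2) * x ^ ε * L ^ (-(1 / 2) : ℝ) := by
  rw [mul_inv, ← rpow_neg hx.le, rpow_neg hL, ← sqrt_eq_rpow, ← rpow_add hx]
  ring_nf

theorem multihop_converse_bound_general (n : ℕ) (hn : 2 ≤ n) (α β ε' c₇ W r S Tn : ℝ)
    (N : ℕ)
    (hc₇ : 0 < c₇) (hW : 0 < W)
    (hN : (N : ℝ) * (Real.pi * r * (n : ℝ) ^ (-(1 - (α - β)) / 2 - ε')) ≤ 1)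
    (hS : S ≤ W * N) (hT : Tn ≤ S / n)
    (hr : c₇ * Real.sqrt (Real.log n / n) ≤ r) :
    Tn ≤ W / (Real.pi * c₇) * (n : ℝ) ^ (-(α - β) / 2) * (n : ℝ) ^ ε' *
      (Real.log n) ^ (-(1 / 2) : ℝ) := by
  have hn0 : (0 : ℝ) < n := by positivity
  have hlog : 0 < log n := log_pos (by exact_mod_cast hn)
  have hr₀ : 0 < c₇ * √(log n / n) := by positivity
  calc Tn ≤ W / (n * (π * r * (n : ℝ) ^ (-(1 - (α - β)) / 2 - ε'))) :=
        le_div_mul_of_mul_le_one hW.le hn0 (by have := hr₀.trans_le hr; positivity) hN hS hT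
    _ ≤ W / (n * (π * (c₇ * √(log n / n)) * (n : ℝ) ^ (-(1 - (α - β)) / 2 - ε'))) := by
        gcongr
    _ = W / (π * c₇) * (√(log n) * (n : ℝ) ^ ((α - β) / 2 - ε'))⁻¹ := by
        rw [← mul_sqrt_div_mul_rpow (log n) (α - β) ε' hn0]
        field_simp
    _ = _ := by rw [inv_sqrt_mul_rpow _ _ hn0 hlog.le]; ring

/-- Protocol-model converse for multihop delivery: if at least `c n` SD pairs have
distance at least `d_n = n^{-(1-(α-β))/2-ε'}`, each simultaneously active pair
exclusively occupies area at least `π r d_n` and these areas are disjoint within the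
unit square (so `N π r d_n ≤ 1`), the sum rate satisfies `S ≤ W N`, the symmetric
throughput satisfies `T_n ≤ S/n`, and `r ≥ c₇ √(log n / n)`, then
`T_n ≤ (W/(π c₇)) n^{-(α-β)/2} n^{ε'} (log n)^{-1/2}`. -/
theorem multihop_converse_bound (n : ℕ) (hn : 2 ≤ n) (α β ε' c c₇ W r S Tn : ℝ)
    (npairs N : ℕ)
    (hαβ₀ : 0 < α - β) (hαβ₁ : α - β ≤ 1) (hε' : 0 < ε') (hc : 0 < c)
    (hc₇ : 0 < c₇) (hW : 0 < W)
    (hpairs : c * (n : ℝ) ≤ (npairs : ℝ))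
    (hN : (N : ℝ) * (Real.pi * r * (n : ℝ) ^ (-(1 - (α - β)) / 2 - ε')) ≤ 1)
    (hS : S ≤ W * N) (hT : Tn ≤ S / n)
    (hr : c₇ * Real.sqrt (Real.log n / n) ≤ r) :
    Tn ≤ W / (Real.pi * c₇) * (n : ℝ) ^ (-(α - β) / 2) * (n : ℝ) ^ ε' *
      (Real.log n) ^ (-(1 / 2) : ℝ) :=
  multihop_converse_bound_general n hn α β ε' c₇ W r S Tn N hc₇ hW hN hS hT hr
end
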